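/- Trapezoid inequality for multiplicatively convex derivative: if f : [a,b] → ℝ⁺ is differentiable, a < b, and f* = e^{f'/f} is multiplicatively convex on [a,b] with f* ≥ 1, then √(f(a) f(b)) · exp((1/(a-b)) ∫_a^b ln f(u) du) ≤ (f*(a) f*(b))^{(b-a)/8}. -/

import Mathlib

open Real intervalIntegral

/-! With `D = f' / f = (log f)'`, multiplicative convexity of `f* = exp ∘ D` is ordinary convexity
of `D`, and `f* ≥ 1` says `D ≥ 0`; hence `0 ≤ D ≤ D a + D b` on `[a, b]`. After taking logarithms
the claim is a trapezoid error bound for `g = log f`. Integrating by parts against the kernel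
`x - (a + b) / 2`, the error is `(b - a)⁻¹ ∫ (x - (a + b) / 2) g' x`: the left half of the interval
contributes at most `0` since `g' ≥ 0`, the right half at most `(D a + D b) (b - a)² / 8`. -/

theorem convexOn_of_exp_le_exp_rpow_mul_exp_rpow {s : Set ℝ} (hs : Convex ℝ s) {φ : ℝ → ℝ}
    (h : ∀ x ∈ s, ∀ y ∈ s, ∀ t ∈ Set.Icc (0:ℝ) 1,
      exp (φ (t * x + (1 - t) * y)) ≤ exp (φ x) ^ t * exp (φ y) ^ (1 - t)) :
    ConvexOn ℝ s φ := by
  refine ⟨hs, fun x hx y hy t u ht hu htu => ?_⟩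
  obtain rfl : u = 1 - t := by linarith
  have := h x hx y hy t ⟨ht, by linarith⟩
  rw [← exp_mul, ← exp_mul, ← exp_add, exp_le_exp] at this
  simpa only [smul_eq_mul, mul_comm] using this

theorem ConvexOn.le_add_of_mem_segment {s : Set ℝ} {φ : ℝ → ℝ} (hφ : ConvexOn ℝ s φ)
    {x y z : ℝ} (hx : x ∈ s) (hy : y ∈ s) (hz : z ∈ segment ℝ x y) (hφx : 0 ≤ φ x)
    (hφy : 0 ≤ φ y) : φ z ≤ φ x + φ y :=
  (hφ.le_on_segment hx hy hz).trans (max_le_add_of_nonneg hφx hφy)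

theorem integral_sub_midpoint_mul_deriv {g g' : ℝ → ℝ} {a b : ℝ}
    (hg : ∀ x ∈ Set.uIcc a b, HasDerivAt g (g' x) x)
    (hg' : IntervalIntegrable g' MeasureTheory.volume a b) :
    ∫ x in a..b, (x - (a + b) / 2) * g' x = (b - a) / 2 * (g a + g b) - ∫ x in a..b, g x := by
  have hw : ∀ x ∈ Set.uIcc a b, HasDerivAt (fun x => x - (a + b) / 2) 1 x :=
    fun x _ => (hasDerivAt_id x).sub_const _
  rw [integral_mul_deriv_eq_deriv_mul hw hg intervalIntegrable_const hg']
  simp only [one_mul]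
  ring

theorem integral_sub_midpoint_mul_le {φ : ℝ → ℝ} {a b M : ℝ} (hab : a ≤ b)
    (hφ : IntervalIntegrable φ MeasureTheory.volume a b)
    (hφ0 : ∀ x ∈ Set.Icc a b, 0 ≤ φ x) (hφM : ∀ x ∈ Set.Icc a b, φ x ≤ M) :
    ∫ x in a..b, (x - (a + b) / 2) * φ x ≤ M * (b - a) ^ 2 / 8 := by
  obtain ⟨m, hm⟩ : ∃ m, m = (a + b) / 2 := ⟨_, rfl⟩
  rw [← hm]
  have ham : a ≤ m := by linarith
  have hmb : m ≤ b := by linarith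
  have hw : Continuous fun x : ℝ => x - m := by fun_prop
  have hint : IntervalIntegrable (fun x => (x - m) * φ x) MeasureTheory.volume a b :=
    hφ.continuousOn_mul hw.continuousOn
  have hsub : ∀ {c d}, c ∈ Set.Icc a b → d ∈ Set.Icc a b → Set.uIcc c d ⊆ Set.uIcc a b :=
    fun hc hd => Set.uIcc_subset_uIcc (Set.Icc_subset_uIcc hc) (Set.Icc_subset_uIcc hd)
  have hint_left := hint.mono_set (hsub ⟨le_rfl, hab⟩ ⟨ham, hmb⟩)
  have hint_right := hint.mono_set (hsub ⟨ham, hmb⟩ ⟨hab, le_rfl⟩)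
  have hleft : ∫ x in a..m, (x - m) * φ x ≤ ∫ _ in a..m, (0 : ℝ) :=
    integral_mono_on ham hint_left intervalIntegrable_const fun x hx =>
      mul_nonpos_of_nonpos_of_nonneg (by linarith [hx.2]) (hφ0 x ⟨hx.1, hx.2.trans hmb⟩)
  have hright : ∫ x in m..b, (x - m) * φ x ≤ ∫ x in m..b, (x - m) * M :=
    integral_mono_on hmb hint_right ((hw.intervalIntegrable _ _).mul_const _) fun x hx =>
      mul_le_mul_of_nonneg_left (hφM x ⟨ham.trans hx.1, hx.2⟩) (by linarith [hx.1])
  have hlin : ∫ x in m..b, (x - m) * M = M * (b - a) ^ 2 / 8 := by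
    rw [integral_mul_const, integral_comp_sub_right (fun x => x), integral_id, hm]
    ring
  rw [integral_zero] at hleft
  rw [← integral_add_adjacent_intervals hint_left hint_right]
  linarith

theorem trapezoid_error_le_of_deriv_mem_Icc {g g' : ℝ → ℝ} {a b M : ℝ} (hab : a < b)
    (hg : ∀ x ∈ Set.Icc a b, HasDerivAt g (g' x) x)
    (hg' : IntervalIntegrable g' MeasureTheory.volume a b)
    (hg'0 : ∀ x ∈ Set.Icc a b, 0 ≤ g' x) (hg'M : ∀ x ∈ Set.Icc a b, g' x ≤ M) :
    (g a + g b) / 2 + 1 / (a - b) * ∫ x in a..b, g x ≤ M * ((b - a) / 8) := by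
  have hba : 0 < b - a := sub_pos.mpr hab
  have hg_uIcc : ∀ x ∈ Set.uIcc a b, HasDerivAt g (g' x) x := by
    rwa [Set.uIcc_of_le hab.le]
  have herror : (g a + g b) / 2 + 1 / (a - b) * ∫ x in a..b, g x
      = (∫ x in a..b, (x - (a + b) / 2) * g' x) / (b - a) := by
    rw [integral_sub_midpoint_mul_deriv hg_uIcc hg', one_div, ← neg_sub b a, inv_neg]
    field_simp
    ring
  rw [herror, div_le_iff₀ hba]
  nlinarith [integral_sub_midpoint_mul_le hab.le hg' hg'0 hg'M]

/-- Trapezoid inequality for functions with multiplicatively convex multiplicative derivative. -/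
theorem mul_trapezoid_inequality (f : ℝ → ℝ) (a b : ℝ) (hab : a < b)
    (hpos : ∀ x ∈ Set.Icc a b, 0 < f x)
    (hdiff : ∀ x ∈ Set.Icc a b, DifferentiableAt ℝ f x)
    (hint : IntervalIntegrable (fun x => deriv f x / f x) MeasureTheory.volume a b)
    (hconv : ∀ x ∈ Set.Icc a b, ∀ y ∈ Set.Icc a b, ∀ t ∈ Set.Icc (0:ℝ) 1,
      Real.exp (deriv f (t * x + (1 - t) * y) / f (t * x + (1 - t) * y)) ≤
        Real.exp (deriv f x / f x) ^ t * Real.exp (deriv f y / f y) ^ (1 - t))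
    (hone : ∀ x ∈ Set.Icc a b, 1 ≤ Real.exp (deriv f x / f x)) :
    Real.sqrt (f a * f b) * Real.exp ((1 / (a - b)) * ∫ u in a..b, Real.log (f u)) ≤
      (Real.exp (deriv f a / f a) * Real.exp (deriv f b / f b)) ^ ((b - a) / 8) := by
  have ha : a ∈ Set.Icc a b := Set.left_mem_Icc.mpr hab.le
  have hb : b ∈ Set.Icc a b := Set.right_mem_Icc.mpr hab.le
  have hD0 : ∀ x ∈ Set.Icc a b, 0 ≤ deriv f x / f x := fun x hx => one_le_exp_iff.mp (hone x hx)
  have hDconv := convexOn_of_exp_le_exp_rpow_mul_exp_rpow (φ := fun x => deriv f x / f x)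
    (convex_Icc a b) hconv
  have hDle : ∀ x ∈ Set.Icc a b, deriv f x / f x ≤ deriv f a / f a + deriv f b / f b :=
    fun x hx => hDconv.le_add_of_mem_segment ha hb (by rwa [segment_eq_Icc hab.le]) (hD0 a ha)
      (hD0 b hb)
  have hlog : ∀ x ∈ Set.Icc a b, HasDerivAt (fun x => log (f x)) (deriv f x / f x) x :=
    fun x hx => (hdiff x hx).hasDerivAt.log (hpos x hx).ne'
  have hfab : 0 < f a * f b := mul_pos (hpos a ha) (hpos b hb)
  have hsqrt : √(f a * f b) = exp ((log (f a) + log (f b)) / 2) := by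
    rw [← log_mul (hpos a ha).ne' (hpos b hb).ne', ← log_sqrt hfab.le, exp_log (sqrt_pos.mpr hfab)]
  calc √(f a * f b) * exp (1 / (a - b) * ∫ u in a..b, log (f u))
      = exp ((log (f a) + log (f b)) / 2 + 1 / (a - b) * ∫ u in a..b, log (f u)) := by
        rw [hsqrt, exp_add]
    _ ≤ exp ((deriv f a / f a + deriv f b / f b) * ((b - a) / 8)) :=
        exp_le_exp.mpr (trapezoid_error_le_of_deriv_mem_Icc hab hlog hint hD0 hDle)
    _ = (exp (deriv f a / f a) * exp (deriv f b / f b)) ^ ((b - a) / 8) := by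
        rw [← exp_add, exp_mul]
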